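/- Let K be a number field with s real embeddings and 2t complex embeddings, with s ≥ 1. Then the unit group O_K^* of the ring of integers is isomorphic to the product of the group {±1} and a free abelian group of rank s + t - 1. -/

import Mathlib

/-!
Dirichlet's unit theorem, in Mathlib's form, says that every unit is uniquely `ζ * ∏ εᵢ ^ nᵢ`
with `ζ` torsion and `εᵢ` a fundamental system of `card (InfinitePlace K) - 1` units. A real
place embeds the torsion (roots of unity) into `ℝ`, where the only roots of unity are `±1`;
so the torsion has order `2` and is isomorphic to `ℤˣ`.
-/

open NumberField

namespace NumberField.Units

open InfinitePlace

variable {K : Type*} [Field K] [NumberField K]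

theorem torsion_eq_one_or_neg_one_of_nrRealPlaces_ne_zero (h : nrRealPlaces K ≠ 0)
    (x : torsion K) : (x : (𝓞 K)ˣ) = 1 ∨ (x : (𝓞 K)ˣ) = -1 := by
  have horder : orderOf ((x : (𝓞 K)ˣ) : K) = orderOf (x : (𝓞 K)ˣ) := by
    rw [← orderOf_units, ← orderOf_injective (algebraMap (𝓞 K) K).toMonoidHom
      RingOfIntegers.coe_injective]
    rfl
  by_cases! hc : 2 < orderOf (x : (𝓞 K)ˣ)
  · rw [← horder] at hc
    exact absurd (IsPrimitiveRoot.nrRealPlaces_eq_zero_of_two_lt hc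
      (IsPrimitiveRoot.orderOf _)) h
  · interval_cases hi : orderOf (x : (𝓞 K)ˣ)
    · exact absurd hi (orderOf_pos_iff.2 ((CommGroup.mem_torsion x.1).1 x.2)).ne'
    · exact Or.inl (orderOf_eq_one_iff.1 hi)
    · rw [← orderOf_units, CharP.orderOf_eq_two_iff 0 (by decide)] at hi
      simp [← Units.val_inj, hi]

theorem torsionOrder_eq_two_of_nrRealPlaces_ne_zero (h : nrRealPlaces K ≠ 0) :
    torsionOrder K = 2 := by
  classical
  let := Fintype.ofFinite (torsion K)
  rw [torsionOrder, Nat.card_eq_fintype_card]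
  refine (Finset.card_eq_two.2 ⟨1, ⟨-1, neg_one_mem_torsion⟩,
    by simp [← Subtype.coe_ne_coe], Finset.ext fun x ↦ ⟨fun _ ↦ ?_, fun _ ↦ Finset.mem_univ _⟩⟩)
  rw [Finset.mem_insert, Finset.mem_singleton, ← Subtype.val_inj, ← Subtype.val_inj]
  exact torsion_eq_one_or_neg_one_of_nrRealPlaces_ne_zero h x

noncomputable def torsionMulEquivIntUnits (h : nrRealPlaces K ≠ 0) : torsion K ≃* ℤˣ :=
  mulEquivOfPrimeCardEq (torsionOrder_eq_two_of_nrRealPlaces_ne_zero h)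
    (by rw [Nat.card_eq_fintype_card, Fintype.card_units_int])

variable (K)

theorem rank_eq_nrRealPlaces_add_nrComplexPlaces_sub_one :
    rank K = nrRealPlaces K + nrComplexPlaces K - 1 := by
  rw [rank, card_eq_nrRealPlaces_add_nrComplexPlaces]

noncomputable def torsionProdExponentsHom :
    torsion K × Multiplicative (Fin (rank K) → ℤ) →* (𝓞 K)ˣ where
  toFun p := p.1 * ∏ i, fundSystem K i ^ p.2.toAdd i
  map_one' := by simp
  map_mul' p q := by
    simp only [Prod.fst_mul, Prod.snd_mul, Subgroup.coe_mul, toAdd_mul, Pi.add_apply,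
      zpow_add, Finset.prod_mul_distrib]
    exact mul_mul_mul_comm _ _ _ _

theorem torsionProdExponentsHom_bijective : Function.Bijective (torsionProdExponentsHom K) := by
  refine (Function.bijective_iff_existsUnique _).2 fun x ↦ ?_
  obtain ⟨⟨ζ, e⟩, hx, huniq⟩ := exist_unique_eq_mul_prod K x
  refine ⟨(ζ, .ofAdd e), hx.symm, fun p hp ↦ ?_⟩
  have := huniq (p.1, p.2.toAdd) hp.symm
  rw [Prod.ext_iff] at this ⊢
  exact ⟨this.1, congrArg Multiplicative.ofAdd this.2⟩

noncomputable def mulEquivTorsionProd :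
    (𝓞 K)ˣ ≃* torsion K × Multiplicative (Fin (rank K) → ℤ) :=
  (MulEquiv.ofBijective _ (torsionProdExponentsHom_bijective K)).symm

end NumberField.Units

open NumberField.Units in
/-- Dirichlet's unit theorem: for a number field `K` with `s ≥ 1` real places and
`t` complex places, the unit group of the ring of integers is isomorphic to
`{±1} × ℤ^(s+t-1)`. -/
theorem unit_group_structure (K : Type*) [Field K] [NumberField K]
    (s t : ℕ) (hs : s = InfinitePlace.nrRealPlaces K)
    (ht : t = InfinitePlace.nrComplexPlaces K) (hs1 : 1 ≤ s) :
    Nonempty ((𝓞 K)ˣ ≃* ℤˣ × Multiplicative (Fin (s + t - 1) → ℤ)) := by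
  have hreal : InfinitePlace.nrRealPlaces K ≠ 0 := by omega
  rw [hs, ht, ← rank_eq_nrRealPlaces_add_nrComplexPlaces_sub_one]
  exact ⟨(mulEquivTorsionProd K).trans
    ((torsionMulEquivIntUnits hreal).prodCongr (MulEquiv.refl _))⟩
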